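/- arXiv:2307.07973 — 3 statements merged into one kernel-verified Lean document; each statement's English description precedes it below -/
import Mathlib

section
/- In an HCM satisfying the normality assumption (X_i | X_C is conditionally standard-normal after standardization if and only if pa_i ⊆ C, for C a subset of the non-descendants of i), for every parent j ∈ pa_i, X_i is NOT conditionally independent of X_j given X_{pa_i \ {j}}. -/
/-!
Since `j ∈ pa_i`, conditioning on `X_{pa_i}` is conditioning on `X_{pa_i \ {j}}` and `X_j`
jointly. If `X_i ⊥ X_j | X_{pa_i \ {j}}`, then adding `X_j` to the conditioning set does not
change the conditional expectation of any function of `(X_{pa_i \ {j}}, X_i)`, so the conditional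
mean and variance of `X_i`, hence the standardized residual, are the same for both conditioning
sets. By stability the residual given `X_{pa_i}` is standard normal, so the one given
`X_{pa_i \ {j}}` is too, and stability again forces `pa_i ⊆ pa_i \ {j}`, which fails at `j`.
-/

open MeasureTheory ProbabilityTheory

/-- The σ-algebra generated by the variables `X j`, `j ∈ S` (conditioning on `X_S`). -/
def condAlg {Ω : Type*} {d : ℕ} (X : Fin d → Ω → ℝ) (S : Set (Fin d)) :
    MeasurableSpace Ω :=
  MeasurableSpace.comap (fun ω => fun j : S => X j ω) inferInstance

/-- The standardized residual `(X_i − E[X_i | X_C]) / sqrt(Var[X_i | X_C])`. -/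
noncomputable def stdResid {Ω : Type*} [MeasurableSpace Ω] (μ : Measure Ω)
    {d : ℕ} (X : Fin d → Ω → ℝ) (i : Fin d) (C : Set (Fin d)) : Ω → ℝ :=
  fun ω =>
    (X i ω - (μ[X i | condAlg X C]) ω) /
      Real.sqrt ((μ[fun ω' => (X i ω' - (μ[X i | condAlg X C]) ω') ^ 2 | condAlg X C]) ω)

theorem condExp_sup_comap_ae_eq_of_condIndepFun {Ω β β' γ : Type*} {mΩ : MeasurableSpace Ω}
    [StandardBorelSpace Ω] [Nonempty Ω] {μ : Measure Ω} [IsFiniteMeasure μ]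
    [MeasurableSpace β] [StandardBorelSpace β] [Nonempty β]
    [MeasurableSpace β'] [StandardBorelSpace β'] [Nonempty β'] [mγ : MeasurableSpace γ]
    {f : Ω → β} {g : Ω → β'} {k : Ω → γ} (hf : Measurable f) (hg : Measurable g)
    (hk : Measurable k) (hfg : f ⟂ᵢ[k, hk; μ] g) {h : Ω → ℝ}
    (hh : StronglyMeasurable[mγ.comap k ⊔ MeasurableSpace.comap f inferInstance] h) :
    μ[h | mγ.comap k ⊔ MeasurableSpace.comap g inferInstance] =ᵐ[μ] μ[h | mγ.comap k] := by
  by_cases hint : Integrable h μ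
  swap
  · rw [condExp_of_not_integrable hint, condExp_of_not_integrable hint]
  rw [← MeasurableSpace.comap_prodMk] at hh ⊢
  obtain ⟨φ, hφ, rfl⟩ := hh.exists_eq_measurable_comp
  -- the conditional law of `f` given `(k, g)` depends on `k` only
  have hkernel := (condIndepFun_iff_condDistrib_prod_ae_eq_prodMkRight hf hg hk).mp hfg.symm
  have hkg : Measurable fun ω ↦ (k ω, g ω) := hk.prodMk hg
  calc μ[φ ∘ fun ω ↦ (k ω, f ω) | _]
      =ᵐ[μ] fun ω ↦ ∫ y, φ (k ω, y) ∂condDistrib f (fun ω ↦ (k ω, g ω)) μ (k ω, g ω) :=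
        condExp_prod_ae_eq_integral_condDistrib
          (f := fun p : (γ × β') × β ↦ φ (p.1.1, p.2)) hkg hf.aemeasurable
          (hφ.comp_measurable (by fun_prop)) hint
    _ =ᵐ[μ] fun ω ↦ ∫ y, φ (k ω, y) ∂condDistrib f k μ (k ω) := by
        filter_upwards [ae_of_ae_map hkg.aemeasurable hkernel] with ω hω
        rw [hω, Kernel.prodMkRight_apply]
    _ =ᵐ[μ] μ[φ ∘ fun ω ↦ (k ω, f ω) | mγ.comap k] :=
        (condExp_prod_ae_eq_integral_condDistrib hk hf.aemeasurable hφ hint).symm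

theorem condAlg_eq_iSup {Ω : Type*} {d : ℕ} (X : Fin d → Ω → ℝ) (S : Set (Fin d)) :
    condAlg X S = ⨆ k : S, MeasurableSpace.comap (X k) inferInstance := by
  simp_rw [condAlg, MeasurableSpace.pi, MeasurableSpace.comap_iSup, MeasurableSpace.comap_comp]
  rfl

theorem condAlg_eq_sup_of_mem {Ω : Type*} {d : ℕ} (X : Fin d → Ω → ℝ) {S : Set (Fin d)}
    {j : Fin d} (hj : j ∈ S) :
    condAlg X S = condAlg X (S \ {j}) ⊔ MeasurableSpace.comap (X j) inferInstance := by
  rw [condAlg_eq_iSup, condAlg_eq_iSup]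
  apply le_antisymm
  · refine iSup_le fun k ↦ ?_
    by_cases hk : (k : Fin d) = j
    · exact hk ▸ le_sup_right
    · exact le_sup_of_le_left (le_iSup_of_le (⟨k, k.2, hk⟩ : ↥(S \ {j})) le_rfl)
  · exact sup_le (iSup_le fun k ↦ le_iSup_of_le (⟨k, k.2.1⟩ : S) le_rfl)
      (le_iSup_of_le (⟨j, hj⟩ : S) le_rfl)

theorem stdResid_ae_eq_of_condExp_ae_eq {Ω : Type*} [MeasurableSpace Ω] {μ : Measure Ω} {d : ℕ}
    {X : Fin d → Ω → ℝ} {i : Fin d} {C C' : Set (Fin d)}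
    (hcondExp : ∀ φ : Ω → ℝ,
      StronglyMeasurable[condAlg X C' ⊔ MeasurableSpace.comap (X i) inferInstance] φ →
      μ[φ | condAlg X C] =ᵐ[μ] μ[φ | condAlg X C']) :
    stdResid μ X i C =ᵐ[μ] stdResid μ X i C' := by
  have hXi : StronglyMeasurable[condAlg X C' ⊔ MeasurableSpace.comap (X i) inferInstance] (X i) :=
    (comap_measurable (X i)).stronglyMeasurable.mono le_sup_right
  have hmean := hcondExp (X i) hXi
  have hvar := hcondExp (fun ω ↦ (X i ω - μ[X i | condAlg X C'] ω) ^ 2)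
    ((hXi.sub (stronglyMeasurable_condExp.mono le_sup_left)).pow 2)
  have hcentered : μ[fun ω ↦ (X i ω - μ[X i | condAlg X C] ω) ^ 2 | condAlg X C]
      =ᵐ[μ] μ[fun ω ↦ (X i ω - μ[X i | condAlg X C'] ω) ^ 2 | condAlg X C] :=
    condExp_congr_ae (hmean.mono fun ω hω ↦ by simp only [hω])
  filter_upwards [hmean, hvar, hcentered] with ω h1 h2 h3
  simp only [stdResid, h1, h3, h2]

/-- Corollary 1: In an HCM satisfying the stable-normality assumption
(for `C ⊆ nd_i`, the standardized residual of `X_i` given `X_C` is standard normal iff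
`pa_i ⊆ C`), for every parent `j ∈ pa_i`, `X_i` is NOT conditionally independent of `X_j`
given `X_{pa_i \ {j}}`. -/
theorem stmt_1 {Ω : Type*} {mΩ : MeasurableSpace Ω} [StandardBorelSpace Ω] [Nonempty Ω]
    (μ : Measure Ω) [IsProbabilityMeasure μ]
    {d : ℕ} (Edge : Fin d → Fin d → Prop)
    (hacyclic : ∀ i : Fin d, ¬ Relation.TransGen Edge i i)
    (X : Fin d → Ω → ℝ)
    (hX : ∀ i, Measurable (X i))
    (hle : ∀ S : Set (Fin d), condAlg X S ≤ mΩ)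
    (hstable : ∀ (i : Fin d) (C : Set (Fin d)),
      C ⊆ {j : Fin d | ¬ Relation.ReflTransGen Edge i j} →
      (Measure.map (stdResid μ X i C) μ = gaussianReal 0 1 ↔ {j | Edge j i} ⊆ C)) :
    ∀ i j : Fin d, Edge j i →
      ¬ CondIndepFun (condAlg X ({k | Edge k i} \ {j})) (hle _) (X i) (X j) μ := by
  intro i j hji hindep
  set pa := {k : Fin d | Edge k i}
  have hpa_nd : pa ⊆ {k | ¬ Relation.ReflTransGen Edge i k} :=
    fun k hki hik ↦ hacyclic i (Relation.TransGen.tail' hik hki)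
  have hcondExp : ∀ φ : Ω → ℝ,
      StronglyMeasurable[condAlg X (pa \ {j}) ⊔ MeasurableSpace.comap (X i) inferInstance] φ →
      μ[φ | condAlg X pa] =ᵐ[μ] μ[φ | condAlg X (pa \ {j})] := fun φ hφ ↦ by
    rw [condAlg_eq_sup_of_mem X (S := pa) hji]
    exact condExp_sup_comap_ae_eq_of_condIndepFun (k := fun ω (l : ↥(pa \ {j})) ↦ X l ω)
      (hX i) (hX j) (measurable_pi_lambda _ fun l ↦ hX l) hindep hφ
  have hnormal := (hstable i pa hpa_nd).mpr subset_rfl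
  rw [Measure.map_congr (stdResid_ae_eq_of_condExp_ae_eq hcondExp)] at hnormal
  exact ((hstable i _ (Set.sdiff_subset.trans hpa_nd)).mp hnormal hji).2 rfl
end

section
/- Under the stable-normality assumption and the faithfulness consequence, the DAG of an HCM is uniquely identifiable from the joint distribution P_X: any two DAGs G, G' each satisfying the HCM assumptions and consistent with the same P_X must be equal. -/
/-!
Stable normality lets each graph read the parents of `i` off the same family of residual
distributions, restricted to its own sets of non-descendants of `i`. So the parent sets agree
as soon as the first-graph parents of `i` are non-descendants of `i` in the second graph too.
By well-founded induction along the first graph, the strict first-graph ancestors of `i`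
already have the same parents in both graphs, hence form an ancestral set of the second graph
that avoids `i`: no second-graph descendant of `i` lies in it.
-/

open MeasureTheory ProbabilityTheory

namespace Relation

variable {α : Type*} {E E₁ E₂ : α → α → Prop}

/-- The stable-normality assumption with the normality test abstracted: `P i C` plays the role of
"the standardized residual of `X_i` given `X_C` is standard normal". -/
def DetectsParents (E : α → α → Prop) (P : α → Set α → Prop) : Prop :=
  ∀ i C, C ⊆ {j | ¬ ReflTransGen E i j} → (P i C ↔ {j | E j i} ⊆ C)

lemma ReflTransGen.mem_of_parents_mem {S : Set α} (hS : ∀ j ∈ S, ∀ k, E k j → k ∈ S)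
    {i j : α} (h : ReflTransGen E i j) (hj : j ∈ S) : i ∈ S := by
  induction h with
  | refl => exact hj
  | tail _ hE ih => exact ih (hS _ hj _ hE)

lemma parents_subset_nonDesc {i : α} (hacyc : ¬ TransGen E i i) :
    {j | E j i} ⊆ {j | ¬ ReflTransGen E i j} :=
  fun _ hj hij => hacyc (.tail' hij hj)

lemma parents_eq_of_parents_subset_nonDesc {P : α → Set α → Prop}
    (h₁ : DetectsParents E₁ P) (h₂ : DetectsParents E₂ P) {i : α}
    (hacyc₁ : ¬ TransGen E₁ i i) (hacyc₂ : ¬ TransGen E₂ i i)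
    (hsub : {j | E₁ j i} ⊆ {j | ¬ ReflTransGen E₂ i j}) :
    {j | E₁ j i} = {j | E₂ j i} := by
  have h21 : {j | E₂ j i} ⊆ {j | E₁ j i} :=
    (h₂ i _ hsub).mp ((h₁ i _ (parents_subset_nonDesc hacyc₁)).mpr subset_rfl)
  have h12 : {j | E₁ j i} ⊆ {j | E₂ j i} :=
    (h₁ i _ (h21.trans (parents_subset_nonDesc hacyc₁))).mp
      ((h₂ i _ (parents_subset_nonDesc hacyc₂)).mpr subset_rfl)
  exact h12.antisymm h21

theorem eq_of_detectsParents [Finite α] {P : α → Set α → Prop}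
    (hacyc₁ : ∀ i, ¬ TransGen E₁ i i) (hacyc₂ : ∀ i, ¬ TransGen E₂ i i)
    (h₁ : DetectsParents E₁ P) (h₂ : DetectsParents E₂ P) : E₁ = E₂ := by
  have : Std.Irrefl (TransGen E₁) := ⟨hacyc₁⟩
  have hpa : ∀ i, {j | E₁ j i} = {j | E₂ j i} := fun i₀ =>
    (Finite.wellFounded_of_trans_of_irrefl (TransGen E₁)).induction i₀ fun i ih => by
      refine parents_eq_of_parents_subset_nonDesc h₁ h₂ (hacyc₁ i) (hacyc₂ i) ?_
      let ancestors₁ : Set α := {k | TransGen E₁ k i}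
      have hanc : ∀ k ∈ ancestors₁, ∀ l, E₂ l k → l ∈ ancestors₁ :=
        fun k hk l hl => .head ((Set.ext_iff.mp (ih k hk) l).mpr hl) hk
      exact fun j hj hij => hacyc₁ i (hij.mem_of_parents_mem hanc (.single hj))
  funext j i
  exact propext (Set.ext_iff.mp (hpa i) j)

end Relation

theorem stmt_7_general {Ω : Type*} {mΩ : MeasurableSpace Ω}
    (μ : Measure Ω)
    {d : ℕ} (Edge₁ Edge₂ : Fin d → Fin d → Prop)
    (X : Fin d → Ω → ℝ)
    (hacyclic₁ : ∀ i : Fin d, ¬ Relation.TransGen Edge₁ i i)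
    (hacyclic₂ : ∀ i : Fin d, ¬ Relation.TransGen Edge₂ i i)
    (hstable₁ : ∀ (i : Fin d) (C : Set (Fin d)),
      C ⊆ {j : Fin d | ¬ Relation.ReflTransGen Edge₁ i j} →
      (Measure.map (stdResid μ X i C) μ = gaussianReal 0 1 ↔ {j | Edge₁ j i} ⊆ C))
    (hstable₂ : ∀ (i : Fin d) (C : Set (Fin d)),
      C ⊆ {j : Fin d | ¬ Relation.ReflTransGen Edge₂ i j} →
      (Measure.map (stdResid μ X i C) μ = gaussianReal 0 1 ↔ {j | Edge₂ j i} ⊆ C)) :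
    Edge₁ = Edge₂ :=
  Relation.eq_of_detectsParents hacyclic₁ hacyclic₂ hstable₁ hstable₂

/-- Identifiability of HCMs: Under the stable-normality assumption and the
faithfulness consequence (together with the causal Markov condition expressing consistency
with `P_X`), the DAG of an HCM is uniquely identifiable from the joint distribution: any two
DAGs `Edge₁`, `Edge₂`, each satisfying the HCM assumptions and consistent with the same joint
distribution of `X` under `μ`, must be equal. -/
theorem stmt_7 {Ω : Type*} {mΩ : MeasurableSpace Ω} [StandardBorelSpace Ω] [Nonempty Ω]
    (μ : Measure Ω) [IsProbabilityMeasure μ]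
    {d : ℕ} (Edge₁ Edge₂ : Fin d → Fin d → Prop)
    (X : Fin d → Ω → ℝ)
    (hX : ∀ i, Measurable (X i))
    (hle : ∀ S : Set (Fin d), condAlg X S ≤ mΩ)
    (hacyclic₁ : ∀ i : Fin d, ¬ Relation.TransGen Edge₁ i i)
    (hacyclic₂ : ∀ i : Fin d, ¬ Relation.TransGen Edge₂ i i)
    (hstable₁ : ∀ (i : Fin d) (C : Set (Fin d)),
      C ⊆ {j : Fin d | ¬ Relation.ReflTransGen Edge₁ i j} →
      (Measure.map (stdResid μ X i C) μ = gaussianReal 0 1 ↔ {j | Edge₁ j i} ⊆ C))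
    (hstable₂ : ∀ (i : Fin d) (C : Set (Fin d)),
      C ⊆ {j : Fin d | ¬ Relation.ReflTransGen Edge₂ i j} →
      (Measure.map (stdResid μ X i C) μ = gaussianReal 0 1 ↔ {j | Edge₂ j i} ⊆ C))
    (hMarkov₁ : ∀ i : Fin d,
      CondIndepFun (condAlg X {j | Edge₁ j i}) (hle _) (X i)
        (fun ω => fun j : ↥({j : Fin d | ¬ Relation.ReflTransGen Edge₁ i j} \ {j | Edge₁ j i}) =>
          X j.1 ω) μ)
    (hMarkov₂ : ∀ i : Fin d,
      CondIndepFun (condAlg X {j | Edge₂ j i}) (hle _) (X i)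
        (fun ω => fun j : ↥({j : Fin d | ¬ Relation.ReflTransGen Edge₂ i j} \ {j | Edge₂ j i}) =>
          X j.1 ω) μ)
    (hfaithful₁ : ∀ i j : Fin d, Edge₁ j i →
      ¬ CondIndepFun (condAlg X ({k | Edge₁ k i} \ {j})) (hle _) (X i) (X j) μ)
    (hfaithful₂ : ∀ i j : Fin d, Edge₂ j i →
      ¬ CondIndepFun (condAlg X ({k | Edge₂ k i} \ {j})) (hle _) (X i) (X j) μ) :
    Edge₁ = Edge₂ :=
  stmt_7_general (mΩ := mΩ) μ Edge₁ Edge₂ X hacyclic₁ hacyclic₂ hstable₁ hstable₂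
end

section
/- Let C ⊆ nd_i with pa_i ⊆ C in an HCM. Then E[X_i | X_C] = μ_i(X_pa_i) and Var[X_i | X_C] = σ_i(X_pa_i)² almost surely, and consequently the residual (X_i − E[X_i|X_C])/sqrt(Var[X_i|X_C]) = E_i is standard normal and independent of X_C. -/
/-! Since `pa_i ⊆ C`, the functions `Φ = μ_i(X_pa_i)` and `Ψ = σ_i(X_pa_i)` are measurable for
the σ-algebra of `X_C`, and since `C ⊆ nd_i`, `E_i` is independent of it. Hence in
`X_i = Φ + Ψ E_i` the known factors pull out of the conditional expectation:
`E[X_i | X_C] = Φ + Ψ E[E_i] = Φ` and `E[(X_i - Φ)² | X_C] = Ψ² E[E_i²] = Ψ²`.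
The one delicate point is that `Φ` is integrable: integrating `|a| ≤ E|a + s E_i|` against the
joint law of `(Φ, Ψ)`, which is independent of `E_i`, gives `E|Φ| ≤ E|X_i|`. -/

open MeasureTheory ProbabilityTheory

open scoped ENNReal NNReal

lemma integral_sq_gaussianReal_zero_one : ∫ x, x ^ 2 ∂gaussianReal 0 1 = 1 := by
  have h := variance_id_gaussianReal (μ := 0) (v := 1)
  rw [variance_eq_sub (memLp_id_gaussianReal 2)] at h
  simpa [integral_id_gaussianReal] using h

lemma enorm_le_lintegral_enorm_add_mul_gaussianReal (v : ℝ≥0) (a s : ℝ) :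
    ‖a‖ₑ ≤ ∫⁻ e, ‖a + s * e‖ₑ ∂gaussianReal 0 v := by
  have hmean : ∫ e, (a + s * e) ∂gaussianReal 0 v = a := by
    have hid : Integrable (fun e : ℝ => e) (gaussianReal 0 v) :=
      (memLp_id_gaussianReal 1).integrable le_rfl
    rw [integral_add (integrable_const a) (hid.const_mul s), integral_const_mul,
      integral_id_gaussianReal]
    simp
  calc ‖a‖ₑ = ‖∫ e, (a + s * e) ∂gaussianReal 0 v‖ₑ := by rw [hmean]
    _ ≤ ∫⁻ e, ‖a + s * e‖ₑ ∂gaussianReal 0 v := enorm_integral_le_lintegral_enorm _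

lemma ProbabilityTheory.IndepFun.lintegral_comp_eq_lintegral_lintegral {Ω β γ : Type*}
    {mΩ : MeasurableSpace Ω} [MeasurableSpace β] [MeasurableSpace γ]
    {μ : Measure Ω} [IsFiniteMeasure μ]
    {W : Ω → β} {E : Ω → γ} (hW : Measurable W) (hE : Measurable E) (hWE : IndepFun W E μ)
    {f : β × γ → ℝ≥0∞} (hf : Measurable f) :
    ∫⁻ ω, f (W ω, E ω) ∂μ = ∫⁻ w, ∫⁻ e, f (w, e) ∂(μ.map E) ∂(μ.map W) := by
  rw [← lintegral_map hf (hW.prodMk hE),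
    (indepFun_iff_map_prod_eq_prod_map_map hW.aemeasurable hE.aemeasurable).mp hWE,
    lintegral_prod _ hf.aemeasurable]

lemma measurable_condAlg_comp {Ω : Type*} {d : ℕ} {X : Fin d → Ω → ℝ} {C : Set (Fin d)}
    {f : (Fin d → ℝ) → ℝ} (hf : Measurable f)
    (hfC : ∀ x y : Fin d → ℝ, (∀ j ∈ C, x j = y j) → f x = f y) :
    Measurable[condAlg X C] fun ω => f fun j => X j ω := by
  classical
  let extend : (C → ℝ) → Fin d → ℝ := fun v j => if h : j ∈ C then v ⟨j, h⟩ else 0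
  have hextend : Measurable extend := by
    refine measurable_pi_lambda _ fun j => ?_
    by_cases h : j ∈ C
    · simpa only [extend, dif_pos h] using measurable_pi_apply _
    · simpa only [extend, dif_neg h] using measurable_const
  have hfactor : (fun ω => f fun j => X j ω) = fun ω => f (extend fun j : C => X j ω) :=
    funext fun ω => hfC _ _ fun j hj => by simp only [extend, dif_pos hj]
  rw [hfactor]
  exact (hf.comp hextend).comp (comap_measurable _)

section LocationScale

variable {Ω : Type*} {m mΩ : MeasurableSpace Ω} {μ : Measure Ω} {X Φ Ψ E : Ω → ℝ}

lemma condExp_mul_of_indep [IsFiniteMeasure μ] (hm : m ≤ mΩ) {Y Z : Ω → ℝ}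
    (hY : StronglyMeasurable[m] Y) (hZ : Measurable Z)
    (hind : Indep (MeasurableSpace.comap Z inferInstance) m μ)
    (hYZ : Integrable (fun ω => Y ω * Z ω) μ) (hZint : Integrable Z μ) :
    μ[fun ω => Y ω * Z ω | m] =ᵐ[μ] fun ω => Y ω * μ[Z] := by
  filter_upwards [condExp_mul_of_stronglyMeasurable_left hY hYZ hZint,
    condExp_indep_eq hZ.comap_le hm (comap_measurable Z).stronglyMeasurable hind]
    with ω hYZω hZω
  change μ[Y * Z | m] ω = _
  rw [hYZω, Pi.mul_apply, hZω]

lemma integrable_of_integrable_add_mul_gaussian [IsFiniteMeasure μ] {v : ℝ≥0}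
    (hE : Measurable E) (hlaw : μ.map E = gaussianReal 0 v)
    (hΦ : Measurable Φ) (hΨ : Measurable Ψ) (hind : IndepFun (fun ω => (Φ ω, Ψ ω)) E μ)
    (hX : ∀ ω, X ω = Φ ω + Ψ ω * E ω)
    (hXint : Integrable X μ) : Integrable Φ μ := by
  have hW : Measurable fun ω => (Φ ω, Ψ ω) := hΦ.prodMk hΨ
  refine ⟨hΦ.aestronglyMeasurable, ?_⟩
  calc ∫⁻ ω, ‖Φ ω‖ₑ ∂μ = ∫⁻ w, ‖w.1‖ₑ ∂(μ.map fun ω => (Φ ω, Ψ ω)) :=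
        (lintegral_map measurable_fst.enorm hW).symm
    _ ≤ ∫⁻ w, ∫⁻ e, ‖w.1 + w.2 * e‖ₑ ∂(μ.map E) ∂(μ.map fun ω => (Φ ω, Ψ ω)) := by
        rw [hlaw]
        exact lintegral_mono fun w => enorm_le_lintegral_enorm_add_mul_gaussianReal v _ _
    _ = ∫⁻ ω, ‖X ω‖ₑ ∂μ := by
        simp only [hX]
        exact (hind.lintegral_comp_eq_lintegral_lintegral hW hE
          (measurable_fst.fst.add (measurable_fst.snd.mul measurable_snd)).enorm).symm
    _ < ⊤ := hXint.2

lemma memLp_two_of_map_eq_gaussianReal {m₀ : ℝ} {v : ℝ≥0} (hE : Measurable E)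
    (hlaw : μ.map E = gaussianReal m₀ v) : MemLp E 2 μ := by
  have h : MemLp id 2 (μ.map E) := hlaw ▸ memLp_id_gaussianReal 2
  exact (memLp_map_measure_iff aestronglyMeasurable_id hE.aemeasurable).mp h

lemma integral_pow_of_map_eq_gaussianReal {m₀ : ℝ} {v : ℝ≥0} (hE : Measurable E)
    (hlaw : μ.map E = gaussianReal m₀ v) (n : ℕ) :
    ∫ ω, E ω ^ n ∂μ = ∫ x, x ^ n ∂gaussianReal m₀ v := by
  rw [← hlaw, integral_map hE.aemeasurable (by fun_prop)]

lemma condExp_eq_of_eq_add_mul_gaussian [IsFiniteMeasure μ] {v : ℝ≥0} (hm : m ≤ mΩ)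
    (hE : Measurable E) (hlaw : μ.map E = gaussianReal 0 v)
    (hind : Indep (MeasurableSpace.comap E inferInstance) m μ)
    (hΦ : Measurable[m] Φ) (hΨ : Measurable[m] Ψ) (hX : ∀ ω, X ω = Φ ω + Ψ ω * E ω)
    (hXint : Integrable X μ) : μ[X | m] =ᵐ[μ] Φ := by
  have hW : IndepFun (fun ω => (Φ ω, Ψ ω)) E μ := (IndepFun_iff_Indep _ _ _).mpr
    (indep_of_indep_of_le_left hind.symm (hΦ.prodMk hΨ).comap_le)
  have hΦint : Integrable Φ μ := integrable_of_integrable_add_mul_gaussian hE hlaw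
    (hΦ.mono hm le_rfl) (hΨ.mono hm le_rfl) hW hX hXint
  have hΨE : Integrable (fun ω => Ψ ω * E ω) μ :=
    (hXint.sub hΦint).congr (.of_forall fun ω => by simp [hX ω])
  have hmean : μ[E] = 0 := by
    simpa [integral_id_gaussianReal] using integral_pow_of_map_eq_gaussianReal hE hlaw 1
  have hsplit : X = Φ + fun ω => Ψ ω * E ω := funext hX
  filter_upwards [condExp_add hΦint hΨE m, condExp_mul_of_indep hm hΨ.stronglyMeasurable hE hind
    hΨE ((memLp_two_of_map_eq_gaussianReal hE hlaw).integrable one_le_two)] with ω hadd hmul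
  rw [hsplit, hadd, Pi.add_apply, condExp_of_stronglyMeasurable hm hΦ.stronglyMeasurable hΦint,
    hmul, hmean, mul_zero, add_zero]

lemma condExp_sq_sub_eq_of_eq_add_mul_gaussian [IsFiniteMeasure μ] (hm : m ≤ mΩ)
    (hE : Measurable E) (hlaw : μ.map E = gaussianReal 0 1)
    (hind : Indep (MeasurableSpace.comap E inferInstance) m μ)
    (hΦ : Measurable[m] Φ) (hΨ : Measurable[m] Ψ) (hX : ∀ ω, X ω = Φ ω + Ψ ω * E ω)
    (hX2 : MemLp X 2 μ) : μ[fun ω => (X ω - Φ ω) ^ 2 | m] =ᵐ[μ] fun ω => Ψ ω ^ 2 := by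
  have hΦ2 : MemLp Φ 2 μ := (hX2.condExp one_le_two).ae_eq
    (condExp_eq_of_eq_add_mul_gaussian hm hE hlaw hind hΦ hΨ hX (hX2.integrable one_le_two))
  have hresidual : (fun ω => (X ω - Φ ω) ^ 2) = fun ω => Ψ ω ^ 2 * E ω ^ 2 := by
    funext ω; rw [hX ω]; ring
  have hindE2 : Indep (MeasurableSpace.comap (fun ω => E ω ^ 2) inferInstance) m μ :=
    indep_of_indep_of_le_left hind ((comap_measurable E).pow_const 2).comap_le
  have hmoment : μ[fun ω => E ω ^ 2] = 1 := by
    rw [integral_pow_of_map_eq_gaussianReal hE hlaw, integral_sq_gaussianReal_zero_one]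
  rw [hresidual]
  filter_upwards [condExp_mul_of_indep hm (hΨ.pow_const 2).stronglyMeasurable (hE.pow_const 2)
    hindE2 (hresidual ▸ (hX2.sub hΦ2).integrable_sq)
    (memLp_two_of_map_eq_gaussianReal hE hlaw).integrable_sq] with ω hω
  rw [hω, hmoment, mul_one]

end LocationScale

/-- Let `C ⊆ nd_i` with `pa_i ⊆ C` in an HCM, where
`X_i = μ_i(X_pa_i) + σ_i(X_pa_i)·E_i` and `E_i ~ N(0,1)` is independent of the
non-descendants of `i`. Then `E[X_i | X_C] = μ_i(X_pa_i)` and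
`Var[X_i | X_C] = σ_i(X_pa_i)²` almost surely, and consequently the residual
`(X_i − E[X_i|X_C]) / sqrt(Var[X_i|X_C]) = E_i` is standard normal and independent of `X_C`. -/
theorem stmt_18 {Ω : Type*} {mΩ : MeasurableSpace Ω}
    (μ : Measure Ω) [IsProbabilityMeasure μ]
    {d : ℕ} (Edge : Fin d → Fin d → Prop)
    (X : Fin d → Ω → ℝ) (i : Fin d) (Ei : Ω → ℝ)
    (μf σf : (Fin d → ℝ) → ℝ)
    (hXmeas : ∀ j, Measurable (X j)) (hEimeas : Measurable Ei)
    (hμf : Measurable μf) (hσf : Measurable σf)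
    -- μf and σf depend only on the parents of i
    (hμpa : ∀ x y : Fin d → ℝ, (∀ j, Edge j i → x j = y j) → μf x = μf y)
    (hσpa : ∀ x y : Fin d → ℝ, (∀ j, Edge j i → x j = y j) → σf x = σf y)
    (hσpos : ∀ x, 0 < σf x)
    (hstruct : ∀ ω, X i ω = μf (fun j => X j ω) + σf (fun j => X j ω) * Ei ω)
    (hEgauss : Measure.map Ei μ = gaussianReal 0 1)
    (hEind : IndepFun Ei
      (fun ω => fun j : ↥{j : Fin d | ¬ Relation.ReflTransGen Edge i j} => X j.1 ω) μ)
    (C : Set (Fin d))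
    (hCnd : C ⊆ {j : Fin d | ¬ Relation.ReflTransGen Edge i j})
    (hpaC : {j : Fin d | Edge j i} ⊆ C)
    (hint : Integrable (X i) μ)
    (hint2 : Integrable (fun ω => (X i ω) ^ 2) μ) :
    (μ[X i | condAlg X C] =ᵐ[μ] fun ω => μf (fun j => X j ω)) ∧
    (μ[fun ω => (X i ω - μf (fun j => X j ω)) ^ 2 | condAlg X C]
        =ᵐ[μ] fun ω => (σf (fun j => X j ω)) ^ 2) ∧
    (∀ ω, (X i ω - μf (fun j => X j ω)) / σf (fun j => X j ω) = Ei ω) ∧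
    Measure.map Ei μ = gaussianReal 0 1 ∧
    IndepFun Ei (fun ω => fun j : C => X j ω) μ := by
  have hXC : Measurable fun ω => fun j : C => X j ω := measurable_pi_lambda _ fun j => hXmeas j
  have hm : condAlg X C ≤ mΩ := hXC.comap_le
  have hrestrict : Measurable fun (v : {j | ¬ Relation.ReflTransGen Edge i j} → ℝ) (j : C) =>
      v ⟨j, hCnd j.2⟩ := measurable_pi_lambda _ fun j => measurable_pi_apply _
  have hindC : IndepFun Ei (fun ω => fun j : C => X j ω) μ := hEind.comp measurable_id hrestrict
  have hind : Indep (MeasurableSpace.comap Ei inferInstance) (condAlg X C) μ :=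
    (IndepFun_iff_Indep _ _ _).mp hindC
  have hμC := measurable_condAlg_comp (X := X) hμf
    fun x y h => hμpa x y fun j hj => h j (hpaC hj)
  have hσC := measurable_condAlg_comp (X := X) hσf
    fun x y h => hσpa x y fun j hj => h j (hpaC hj)
  refine ⟨condExp_eq_of_eq_add_mul_gaussian hm hEimeas hEgauss hind hμC hσC hstruct hint,
    condExp_sq_sub_eq_of_eq_add_mul_gaussian hm hEimeas hEgauss hind hμC hσC hstruct
      ((memLp_two_iff_integrable_sq (hXmeas i).aestronglyMeasurable).mpr hint2),
    fun ω => ?_, hEgauss, hindC⟩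
  rw [hstruct ω, add_sub_cancel_left, mul_div_cancel_left₀ _ (hσpos _).ne']
end
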